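/- Let {ψᵢ¹ ⊗ ψᵢ² ⊗ ⋯ ⊗ ψᵢⁿ : i = 1…d} be an orthonormal product basis of ℂ^{d₁} ⊗ ⋯ ⊗ ℂ^{d_n}, d = d₁d₂⋯d_n, and let μ¹ ∈ ℂ^{d₁}, …, μⁿ ∈ ℂ^{d_n} be unit vectors. Then the product state μ¹ ⊗ ⋯ ⊗ μⁿ is mutually unbiased to the basis (i.e. |⟨ψᵢ¹ ⊗ ⋯ ⊗ ψᵢⁿ, μ¹ ⊗ ⋯ ⊗ μⁿ⟩|² = 1/d for all i) if and only if for each r = 1…n and each i = 1…d, |⟨ψᵢʳ, μʳ⟩|² = 1/d_r. -/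

import Mathlib

open scoped ComplexInnerProductSpace

/-- The tensor product `ψ¹ ⊗ ⋯ ⊗ ψⁿ` of `n` vectors, realized concretely on
`EuclideanSpace`: its component at the multi-index `f` is `∏ r, ψ r (f r)`. -/
noncomputable def eprodPi {n : ℕ} {D : Fin n → ℕ}
    (ψ : (r : Fin n) → EuclideanSpace ℂ (Fin (D r))) :
    EuclideanSpace ℂ ((r : Fin n) → Fin (D r)) :=
  WithLp.toLp 2 (fun f => ∏ r, ψ r (f r))

/-!
Write `aᵢʳ = dᵣ |⟨ψᵢʳ, μʳ⟩|²`. Testing the orthonormal basis against the unit product vectors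
`⊗_{r ∈ s} μʳ ⊗ ⊗_{r ∉ s} e_{f(r)}` and summing Parseval's identity over all `f` gives
`∑ᵢ ∏_{r ∈ s} aᵢʳ = d` for every set `s` of parties. If the product state is mutually unbiased,
then `∏ᵣ aᵢʳ = 1` for every `i`; taking `s = {r}` and `s = {r}ᶜ` yields `∑ᵢ aᵢʳ = d` and
`∑ᵢ (aᵢʳ)⁻¹ = d`, and since `x + x⁻¹ ≥ 2` with equality only at `x = 1`, all `aᵢʳ = 1`.
-/

open Finset

theorem eq_one_of_sum_eq_card_of_sum_inv_eq_card {ι : Type*} [Fintype ι] {b : ι → ℝ}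
    (hb : ∀ i, 0 < b i) (hsum : ∑ i, b i = Fintype.card ι)
    (hsum_inv : ∑ i, (b i)⁻¹ = Fintype.card ι) (i : ι) : b i = 1 := by
  have hterm : ∀ j, b j + (b j)⁻¹ - 2 = (b j - 1) ^ 2 / b j := fun j => by
    field_simp [(hb j).ne']
    ring
  have hzero : ∑ j, (b j - 1) ^ 2 / b j = 0 := by
    simp only [← hterm, sum_sub_distrib, sum_add_distrib, hsum, hsum_inv, sum_const, card_univ,
      nsmul_eq_mul]
    ring
  have hi := (sum_eq_zero_iff_of_nonneg fun j _ => by have := hb j; positivity).1 hzero i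
    (mem_univ i)
  rw [div_eq_zero_iff, or_iff_left (hb i).ne', sq_eq_zero_iff, sub_eq_zero] at hi
  exact hi

theorem eq_one_of_prod_eq_one_of_sum_prod_eq_card {ι κ : Type*} [Fintype ι] [Fintype κ]
    [DecidableEq κ] {b : ι → κ → ℝ} (hb : ∀ i k, 0 ≤ b i k) (hprod : ∀ i, ∏ k, b i k = 1)
    (hsum : ∀ s : Finset κ, ∑ i, ∏ k ∈ s, b i k = Fintype.card ι) (i : ι) (k : κ) :
    b i k = 1 := by
  have hpos : ∀ j, 0 < b j k := fun j => (hb j k).lt_of_ne fun h => by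
    simpa [prod_eq_zero (mem_univ k) h.symm] using hprod j
  have hinv : ∀ j, ∏ l ∈ univ.erase k, b j l = (b j k)⁻¹ := fun j =>
    eq_inv_of_mul_eq_one_left (by rw [prod_erase_mul _ _ (mem_univ k), hprod])
  refine eq_one_of_sum_eq_card_of_sum_inv_eq_card (b := fun j => b j k) hpos ?_ ?_ i
  · simpa using hsum {k}
  · simpa [hinv] using hsum (univ.erase k)

theorem Orthonormal.sum_sq_norm_inner_right_of_card_eq_finrank {𝕜 E ι : Type*} [RCLike 𝕜]
    [NormedAddCommGroup E] [InnerProductSpace 𝕜 E] [FiniteDimensional 𝕜 E] [Fintype ι]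
    {v : ι → E} (hv : Orthonormal 𝕜 v) (card_eq : Fintype.card ι = Module.finrank 𝕜 E)
    (x : E) : ∑ i, ‖inner 𝕜 (v i) x‖ ^ 2 = ‖x‖ ^ 2 := by
  simpa using (OrthonormalBasis.mk hv
    (hv.linearIndependent.span_eq_top_of_card_eq_finrank' card_eq).ge).sum_sq_norm_inner_right x

section ProductVectors

variable {n : ℕ} {D : Fin n → ℕ}

theorem inner_eprodPi (ψ φ : (r : Fin n) → EuclideanSpace ℂ (Fin (D r))) :
    ⟪eprodPi ψ, eprodPi φ⟫ = ∏ r, ⟪ψ r, φ r⟫ := by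
  simp only [PiLp.inner_apply, RCLike.inner_apply, eprodPi, map_prod]
  rw [Fintype.prod_sum]
  exact sum_congr rfl fun f _ => prod_mul_distrib.symm

theorem sq_norm_inner_eprodPi (ψ φ : (r : Fin n) → EuclideanSpace ℂ (Fin (D r))) :
    ‖⟪eprodPi ψ, eprodPi φ⟫‖ ^ 2 = ∏ r, ‖⟪ψ r, φ r⟫‖ ^ 2 := by
  rw [inner_eprodPi, norm_prod, ← prod_pow]

theorem sq_norm_eprodPi (ψ : (r : Fin n) → EuclideanSpace ℂ (Fin (D r))) :
    ‖eprodPi ψ‖ ^ 2 = ∏ r, ‖ψ r‖ ^ 2 := by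
  have h := inner_eprodPi ψ ψ
  simp only [inner_self_eq_norm_sq_to_K] at h
  exact_mod_cast h

theorem sum_prod_mul_sq_norm_inner_eq {ι : Type*} [Fintype ι]
    (hcard : Fintype.card ι = ∏ r, D r) (ψ : ι → (r : Fin n) → EuclideanSpace ℂ (Fin (D r)))
    (hψ : ∀ i r, ‖ψ i r‖ = 1) (hB : Orthonormal ℂ (fun i => eprodPi (ψ i)))
    (μ : (r : Fin n) → EuclideanSpace ℂ (Fin (D r))) (hμ : ∀ r, ‖μ r‖ = 1)
    (s : Finset (Fin n)) :
    ∑ i, ∏ r ∈ s, (D r : ℝ) * ‖⟪ψ i r, μ r⟫‖ ^ 2 = ∏ r, (D r : ℝ) := by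
  classical
  let v : ((r : Fin n) → Fin (D r)) → EuclideanSpace ℂ ((r : Fin n) → Fin (D r)) := fun f =>
    eprodPi fun r => if r ∈ s then μ r else EuclideanSpace.single (f r) 1
  have hv : ∀ f, ‖v f‖ ^ 2 = 1 := fun f => by
    rw [sq_norm_eprodPi]
    refine prod_eq_one fun r _ => ?_
    split_ifs
    · simp [hμ r]
    · simp
  have parseval : ∀ f, ∑ i, ‖⟪eprodPi (ψ i), v f⟫‖ ^ 2 = 1 := fun f => by
    rw [hB.sum_sq_norm_inner_right_of_card_eq_finrank (by simp [hcard, Fintype.card_pi]), hv]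
  have hsum_f : ∀ i, ∑ f, ‖⟪eprodPi (ψ i), v f⟫‖ ^ 2
      = ∏ r ∈ s, (D r : ℝ) * ‖⟪ψ i r, μ r⟫‖ ^ 2 := fun i => by
    have hfactor : ∀ r, ∑ k : Fin (D r), (if r ∈ s then ‖⟪ψ i r, μ r⟫‖ ^ 2 else ‖ψ i r k‖ ^ 2)
        = if r ∈ s then (D r : ℝ) * ‖⟪ψ i r, μ r⟫‖ ^ 2 else 1 := fun r => by
      split_ifs
      · simp
      · rw [← EuclideanSpace.norm_sq_eq, hψ i r, one_pow]
    calc ∑ f, ‖⟪eprodPi (ψ i), v f⟫‖ ^ 2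
        = ∑ f : (r : Fin n) → Fin (D r),
            ∏ r, (if r ∈ s then ‖⟪ψ i r, μ r⟫‖ ^ 2 else ‖ψ i r (f r)‖ ^ 2) := by
          refine sum_congr rfl fun f _ => ?_
          rw [sq_norm_inner_eprodPi]
          refine prod_congr rfl fun r _ => ?_
          split_ifs
          · rfl
          · rw [EuclideanSpace.inner_single_right, one_mul, RCLike.norm_conj]
      _ = ∏ r, ∑ k : Fin (D r), (if r ∈ s then ‖⟪ψ i r, μ r⟫‖ ^ 2 else ‖ψ i r k‖ ^ 2) :=
          (Fintype.prod_sum fun r k =>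
            if r ∈ s then ‖⟪ψ i r, μ r⟫‖ ^ 2 else ‖ψ i r k‖ ^ 2).symm
      _ = ∏ r ∈ s, (D r : ℝ) * ‖⟪ψ i r, μ r⟫‖ ^ 2 := by
          simp only [hfactor, prod_ite_mem, univ_inter]
  calc ∑ i, ∏ r ∈ s, (D r : ℝ) * ‖⟪ψ i r, μ r⟫‖ ^ 2
      = ∑ f, ∑ i, ‖⟪eprodPi (ψ i), v f⟫‖ ^ 2 := by simp only [← hsum_f, sum_comm (γ := ι)]
    _ = ∏ r, (D r : ℝ) := by simp [parseval, Fintype.card_pi]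

end ProductVectors

theorem product_state_MU_multipartite_product_basis_iff_general {n : ℕ} {D : Fin n → ℕ}
    (ψ : Fin (∏ r, D r) → (r : Fin n) → EuclideanSpace ℂ (Fin (D r)))
    (hψ : ∀ i r, ‖ψ i r‖ = 1)
    (hB : Orthonormal ℂ (fun i => eprodPi (ψ i)))
    (μ : (r : Fin n) → EuclideanSpace ℂ (Fin (D r)))
    (hμ : ∀ r, ‖μ r‖ = 1) :
    (∀ i, ‖⟪eprodPi (ψ i), eprodPi μ⟫‖ ^ 2 = 1 / ((∏ r, D r : ℕ) : ℝ)) ↔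
      (∀ r i, ‖⟪ψ i r, μ r⟫‖ ^ 2 = 1 / (D r : ℝ)) := by
  refine ⟨fun hMU r i => ?_, fun h i => ?_⟩
  · have hd : ((∏ r, D r : ℕ) : ℝ) ≠ 0 := by exact_mod_cast i.pos.ne'
    have hprod : ∀ j, ∏ r, (D r : ℝ) * ‖⟪ψ j r, μ r⟫‖ ^ 2 = 1 := fun j => by
      rw [prod_mul_distrib, ← sq_norm_inner_eprodPi, hMU j, ← Nat.cast_prod, mul_one_div_cancel hd]
    have hsum := sum_prod_mul_sq_norm_inner_eq (Fintype.card_fin _) ψ hψ hB μ hμ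
    have hi := eq_one_of_prod_eq_one_of_sum_prod_eq_card (fun _ _ => by positivity) hprod
      (by simpa using hsum) i r
    exact eq_one_div_of_mul_eq_one_right hi
  · rw [sq_norm_inner_eprodPi, prod_congr rfl fun r _ => h r i, Nat.cast_prod, prod_div_distrib,
      prod_const_one]

/-- A product state `μ¹ ⊗ ⋯ ⊗ μⁿ` is mutually unbiased to an orthonormal product basis
`{ψᵢ¹ ⊗ ⋯ ⊗ ψᵢⁿ : i = 1…d}` of `ℂ^{d₁} ⊗ ⋯ ⊗ ℂ^{d_n}`, `d = d₁⋯d_n`, if and only if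
for each `r` and each `i`, `|⟨ψᵢʳ, μʳ⟩|² = 1/d_r`. -/
theorem product_state_MU_multipartite_product_basis_iff {n : ℕ} {D : Fin n → ℕ}
    (hD : ∀ r, 2 ≤ D r)
    (ψ : Fin (∏ r, D r) → (r : Fin n) → EuclideanSpace ℂ (Fin (D r)))
    (hψ : ∀ i r, ‖ψ i r‖ = 1)
    (hB : Orthonormal ℂ (fun i => eprodPi (ψ i)))
    (μ : (r : Fin n) → EuclideanSpace ℂ (Fin (D r)))
    (hμ : ∀ r, ‖μ r‖ = 1) :
    (∀ i, ‖⟪eprodPi (ψ i), eprodPi μ⟫‖ ^ 2 = 1 / ((∏ r, D r : ℕ) : ℝ)) ↔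
      (∀ r i, ‖⟪ψ i r, μ r⟫‖ ^ 2 = 1 / (D r : ℝ)) :=
  product_state_MU_multipartite_product_basis_iff_general ψ hψ hB μ hμ
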